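/- arXiv:1306.0414 — 4 statements merged into one kernel-verified Lean document; each statement's English description precedes it below -/
import Mathlib

section
/- Let d ≥ 2, let (e_j)_{j=1}^d be the standard orthonormal basis of ℂ^d, and let ψ_k = (1/√(d−1)) Σ_{j≠k} e_j for k ∈ {1,…,d}. Let Λ be a finite set, and for each k let p_k : Λ → ℝ be nonnegative with Σ_{λ∈Λ} p_k(λ) = 1, and for each j ∈ {1,…,d} let ξ_j : Λ → ℝ be nonnegative with Σ_{j=1}^d ξ_j(λ) = 1 for every λ. If the model reproduces the Born-rule statistics of the basis measurement on these states, i.e. Σ_{λ∈Λ} ξ_j(λ)·p_k(λ) = |⟨e_j, ψ_k⟩|² for all j, k ∈ {1,…,d}, then Σ_{λ∈Λ} min_k p_k(λ) = 0; in particular, there is no λ ∈ Λ with p_k(λ) > 0 for all k. -/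
open scoped ComplexInnerProductSpace

/-- The standard basis vector `e j` of `ℂ^d`. -/
noncomputable def stdVec (d : ℕ) (j : Fin d) : EuclideanSpace ℂ (Fin d) :=
  EuclideanSpace.single j 1

/-- The state `ψ_k = (1/√(d-1)) Σ_{j ≠ k} e_j`. -/
noncomputable def psiMiss (d : ℕ) (k : Fin d) : EuclideanSpace ℂ (Fin d) :=
  ((Real.sqrt ((d : ℝ) - 1) : ℂ))⁻¹ • ∑ j ∈ {k}ᶜ, stdVec d j

/-!
Each `ψ_k` is orthogonal to `e_k`, so the Born rule says that outcome `k` never occurs on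
preparation `k`: every ontic state in the support of `p_k` has `ξ_k = 0`. An ontic state charged
by all the `p_k` would then have `ξ_j = 0` for every `j`, contradicting `Σ_j ξ_j = 1`. Hence
every ontic state is missed by some `p_k`, and `min_k p_k` vanishes identically.
-/

open Finset

lemma psiMiss_apply_self (d : ℕ) (k : Fin d) : psiMiss d k k = 0 := by
  simp [psiMiss, stdVec, Finset.sum_apply]

lemma inner_stdVec_psiMiss_self (d : ℕ) (k : Fin d) : ⟪stdVec d k, psiMiss d k⟫ = 0 := by
  rw [stdVec, EuclideanSpace.inner_single_left, psiMiss_apply_self, mul_zero]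

lemma exists_eq_zero_of_sum_mul_self_eq_zero {ι Λ : Type*} [Fintype ι] [Fintype Λ]
    (p ξ : ι → Λ → ℝ) (hp0 : ∀ k l, 0 ≤ p k l) (hξ0 : ∀ j l, 0 ≤ ξ j l)
    (hξ1 : ∀ l, ∑ j, ξ j l = 1) (hmiss : ∀ k, ∑ l, ξ k l * p k l = 0) (l : Λ) :
    ∃ k, p k l = 0 := by
  by_contra! hpos
  have hξ : ∀ j, ξ j l = 0 := fun j =>
    have hterm := (Fintype.sum_eq_zero_iff_of_nonneg
      fun l => mul_nonneg (hξ0 j l) (hp0 j l)).mp (hmiss j)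
    (mul_eq_zero.mp (congrFun hterm l)).resolve_right (hpos j)
  simpa [hξ] using hξ1 l

/-- an ontological model over a finite set `Λ` that reproduces the
Born-rule statistics of the basis measurement on the states `ψ_k` must have zero
overlap `Σ_λ min_k p_k(λ) = 0`; in particular no ontic state is common to all the
preparations. -/
theorem no_common_ontic_state {d : ℕ} (hd : 2 ≤ d)
    {Λ : Type*} [Fintype Λ] (p ξ : Fin d → Λ → ℝ)
    (hp0 : ∀ k l, 0 ≤ p k l)
    (hξ0 : ∀ j l, 0 ≤ ξ j l) (hξ1 : ∀ l, ∑ j, ξ j l = 1)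
    (hborn : ∀ j k, ∑ l, ξ j l * p k l = ‖⟪stdVec d j, psiMiss d k⟫‖ ^ 2) :
    (∑ l, (Finset.univ.inf'
        (Finset.univ_nonempty_iff.mpr (Fin.pos_iff_nonempty.mp (by omega)))
        fun k => p k l) = 0) ∧
    ¬ ∃ l : Λ, ∀ k, 0 < p k l := by
  have hmiss : ∀ k, ∑ l, ξ k l * p k l = 0 := fun k => by
    rw [hborn, inner_stdVec_psiMiss_self, norm_zero, sq, mul_zero]
  have hexcluded := exists_eq_zero_of_sum_mul_self_eq_zero p ξ hp0 hξ0 hξ1 hmiss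
  refine ⟨sum_eq_zero fun l _ => ?_, fun ⟨l, hl⟩ => ?_⟩
  · obtain ⟨k, hk⟩ := hexcluded l
    exact le_antisymm (hk ▸ inf'_le _ (mem_univ k)) (le_inf' _ _ fun k _ => hp0 k l)
  · obtain ⟨k, hk⟩ := hexcluded l
    exact (hl k).ne' hk
end

section
/- Let Λ be a finite set and d ≥ 1. For each k ∈ {1,…,d} let p_k : Λ → ℝ be nonnegative with Σ_{λ∈Λ} p_k(λ) = 1, let c : Λ → ℝ satisfy 0 ≤ c(λ) ≤ 1, and let ξ_k : Λ → ℝ be nonnegative with Σ_{k=1}^d ξ_k(λ) = c(λ) for every λ. Suppose C_k := Σ_{λ∈Λ} c(λ)·p_k(λ) > 0 for every k. Then Σ_{k=1}^d (Σ_{λ∈Λ} ξ_k(λ)·p_k(λ)) / C_k ≥ Σ_{λ∈Λ} min_k ( c(λ)·p_k(λ) / C_k ). -/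
/-! In each ontic state `λ` the bin responses `ξ_k(λ) ≥ 0` split the click probability `c(λ)`.
With `q_k = p_k / C_k` and `k₀` minimising `q_k(λ)`,
`min_k c(λ) q_k(λ) ≤ Σ_k ξ_k(λ) q_{k₀}(λ) ≤ Σ_k ξ_k(λ) q_k(λ)`;
summing over `λ` and exchanging the two sums gives the bound. -/

open Finset

theorem Finset.inf'_sum_mul_le_sum_mul {ι R : Type*} [Semiring R] [LinearOrder R]
    [IsOrderedRing R] {s : Finset ι} (hs : s.Nonempty) (w q : ι → R)
    (hw : ∀ i ∈ s, 0 ≤ w i) :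
    s.inf' hs (fun i => (∑ j ∈ s, w j) * q i) ≤ ∑ i ∈ s, w i * q i := by
  obtain ⟨i₀, hi₀, hq⟩ := s.exists_mem_eq_inf' hs q
  calc s.inf' hs (fun i => (∑ j ∈ s, w j) * q i)
      ≤ (∑ j ∈ s, w j) * q i₀ := inf'_le _ hi₀
    _ = ∑ j ∈ s, w j * s.inf' hs q := by rw [sum_mul, hq]
    _ ≤ ∑ i ∈ s, w i * q i :=
        sum_le_sum fun i hi => mul_le_mul_of_nonneg_left (inf'_le q hi) (hw i hi)

theorem postselected_response_ge_overlap_general {Λ : Type*} [Fintype Λ] {d : ℕ} (hd : 1 ≤ d)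
    (p ξ : Fin d → Λ → ℝ) (c : Λ → ℝ)
    (hξ0 : ∀ k l, 0 ≤ ξ k l) (hξc : ∀ l, ∑ k, ξ k l = c l) :
    ∑ l, (Finset.univ.inf' (Finset.univ_nonempty_iff.mpr (Fin.pos_iff_nonempty.mp hd))
        fun k => c l * p k l / (∑ l', c l' * p k l'))
      ≤ ∑ k, (∑ l, ξ k l * p k l) / (∑ l, c l * p k l) := by
  calc _ ≤ ∑ l, ∑ k, ξ k l * (p k l / ∑ l', c l' * p k l') := sum_le_sum fun l _ => by
          simpa only [hξc, mul_div_assoc] using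
            inf'_sum_mul_le_sum_mul ⟨⟨0, hd⟩, mem_univ _⟩ (ξ · l)
              (fun k => p k l / ∑ l', c l' * p k l') fun k _ => hξ0 k l
    _ = _ := by simp only [sum_comm (γ := Λ), sum_div, mul_div_assoc]

/-- version of the overlap bound with no-click events. With click
probabilities `c(λ)`, bin-response functions `ξ_k` summing pointwise to `c`, and
total click probabilities `C_k = Σ_λ c(λ) p_k(λ) > 0`, the post-selected success
probability `Σ_k (Σ_λ ξ_k(λ) p_k(λ))/C_k` is at least the post-selected overlap
`Σ_λ min_k (c(λ) p_k(λ)/C_k)`. -/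
theorem postselected_response_ge_overlap {Λ : Type*} [Fintype Λ] {d : ℕ} (hd : 1 ≤ d)
    (p ξ : Fin d → Λ → ℝ) (c : Λ → ℝ)
    (hp0 : ∀ k l, 0 ≤ p k l) (hp1 : ∀ k, ∑ l, p k l = 1)
    (hc0 : ∀ l, 0 ≤ c l) (hc1 : ∀ l, c l ≤ 1)
    (hξ0 : ∀ k l, 0 ≤ ξ k l) (hξc : ∀ l, ∑ k, ξ k l = c l)
    (hC : ∀ k, 0 < ∑ l, c l * p k l) :
    ∑ l, (Finset.univ.inf' (Finset.univ_nonempty_iff.mpr (Fin.pos_iff_nonempty.mp hd))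
        fun k => c l * p k l / (∑ l', c l' * p k l'))
      ≤ ∑ k, (∑ l, ξ k l * p k l) / (∑ l, c l * p k l) :=
  postselected_response_ge_overlap_general hd p ξ c hξ0 hξc
end

section
/- Let Λ be a finite set and d ≥ 1. For each k ∈ {1,…,d} let p_k : Λ → ℝ be nonnegative with Σ_{λ∈Λ} p_k(λ) = 1, let c : Λ → ℝ satisfy 0 ≤ c(λ) ≤ 1, and let ξ_k : Λ → ℝ be nonnegative with Σ_{k=1}^d ξ_k(λ) = c(λ) for every λ. Suppose C_k := Σ_{λ∈Λ} c(λ)·p_k(λ) > 0 for every k, and suppose the model predicts no clicks in the empty bin, i.e. Σ_{λ∈Λ} ξ_k(λ)·p_k(λ) = 0 for every k. Then Σ_{λ∈Λ} min_k ( c(λ)·p_k(λ) / C_k ) = 0; in particular, there is no ontic state λ ∈ Λ with c(λ) > 0 and p_k(λ) > 0 for all k. -/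
/-!
An ontic state that clicks with positive probability must click in some bin `k`, i.e.
`ξ_k(λ) > 0`; since `Σ_λ ξ_k(λ) p_k(λ) = 0` is a sum of nonnegative terms, this forces
`p_k(λ) = 0`. Hence at every `λ` some `c(λ) p_k(λ)` vanishes, so each minimum in the overlap is `0`.
-/

open Finset

lemma Finset.inf'_eq_zero_of_nonneg {ι α : Type*} [SemilatticeInf α] [Zero α] {s : Finset ι}
    (hs : s.Nonempty) {f : ι → α} (hf : ∀ i ∈ s, 0 ≤ f i) {i : ι} (hi : i ∈ s) (hfi : f i = 0) :
    s.inf' hs f = 0 :=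
  le_antisymm (hfi ▸ s.inf'_le f hi) (s.le_inf' hs f hf)

lemma exists_sum_mul_eq_zero_of_sum_mul_eq_zero {ι Λ : Type*} [Fintype ι] [Nonempty ι]
    [Fintype Λ] {p ξ : ι → Λ → ℝ} (hp0 : ∀ k l, 0 ≤ p k l) (hξ0 : ∀ k l, 0 ≤ ξ k l)
    (hzero : ∀ k, ∑ l, ξ k l * p k l = 0) (l : Λ) :
    ∃ k, (∑ k', ξ k' l) * p k l = 0 := by
  by_cases hsum : ∑ k', ξ k' l = 0
  · exact ⟨Classical.arbitrary ι, by rw [hsum, zero_mul]⟩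
  obtain ⟨k, -, hξk⟩ := exists_ne_zero_of_sum_ne_zero hsum
  have hterm : ξ k l * p k l = 0 :=
    (sum_eq_zero_iff_of_nonneg fun l _ => mul_nonneg (hξ0 k l) (hp0 k l)).mp (hzero k) l
      (mem_univ l)
  exact ⟨k, by rw [(mul_eq_zero.mp hterm).resolve_left hξk, mul_zero]⟩

theorem no_common_clicking_ontic_state_general {Λ : Type*} [Fintype Λ] {d : ℕ} (hd : 1 ≤ d)
    (p ξ : Fin d → Λ → ℝ) (c : Λ → ℝ)
    (hp0 : ∀ k l, 0 ≤ p k l)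
    (hc0 : ∀ l, 0 ≤ c l)
    (hξ0 : ∀ k l, 0 ≤ ξ k l) (hξc : ∀ l, ∑ k, ξ k l = c l)
    (hzero : ∀ k, ∑ l, ξ k l * p k l = 0) :
    (∑ l, (Finset.univ.inf' (Finset.univ_nonempty_iff.mpr (Fin.pos_iff_nonempty.mp hd))
        fun k => c l * p k l / (∑ l', c l' * p k l')) = 0) ∧
    ¬ ∃ l : Λ, 0 < c l ∧ ∀ k, 0 < p k l := by
  have : Nonempty (Fin d) := Fin.pos_iff_nonempty.mp hd
  have hvanish : ∀ l, ∃ k, c l * p k l = 0 := fun l => by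
    simpa only [hξc] using exists_sum_mul_eq_zero_of_sum_mul_eq_zero hp0 hξ0 hzero l
  have hnonneg : ∀ k l, 0 ≤ c l * p k l := fun k l => mul_nonneg (hc0 l) (hp0 k l)
  refine ⟨sum_eq_zero fun l _ => ?_, fun ⟨l, hcl, hpl⟩ => ?_⟩
  · obtain ⟨k, hk⟩ := hvanish l
    refine inf'_eq_zero_of_nonneg _ (fun k _ => ?_) (mem_univ k) (by rw [hk, zero_div])
    exact div_nonneg (hnonneg k l) (sum_nonneg fun l' _ => hnonneg k l')
  · obtain ⟨k, hk⟩ := hvanish l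
    exact (mul_pos hcl (hpl k)).ne' hk

/-- no-go theorem with inefficient detectors. If the model predicts no
clicks in the empty bin (`Σ_λ ξ_k(λ) p_k(λ) = 0` for all `k`) while every preparation
has positive click probability `C_k = Σ_λ c(λ) p_k(λ) > 0`, then the post-selected
overlap `Σ_λ min_k (c(λ) p_k(λ)/C_k)` vanishes; in particular no ontic state with
positive click probability is common to all preparations. -/
theorem no_common_clicking_ontic_state {Λ : Type*} [Fintype Λ] {d : ℕ} (hd : 1 ≤ d)
    (p ξ : Fin d → Λ → ℝ) (c : Λ → ℝ)
    (hp0 : ∀ k l, 0 ≤ p k l) (hp1 : ∀ k, ∑ l, p k l = 1)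
    (hc0 : ∀ l, 0 ≤ c l) (hc1 : ∀ l, c l ≤ 1)
    (hξ0 : ∀ k l, 0 ≤ ξ k l) (hξc : ∀ l, ∑ k, ξ k l = c l)
    (hC : ∀ k, 0 < ∑ l, c l * p k l)
    (hzero : ∀ k, ∑ l, ξ k l * p k l = 0) :
    (∑ l, (Finset.univ.inf' (Finset.univ_nonempty_iff.mpr (Fin.pos_iff_nonempty.mp hd))
        fun k => c l * p k l / (∑ l', c l' * p k l')) = 0) ∧
    ¬ ∃ l : Λ, 0 < c l ∧ ∀ k, 0 < p k l :=
  no_common_clicking_ontic_state_general hd p ξ c hp0 hc0 hξ0 hξc hzero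
end

section
/- Let H be a complex Hilbert space, let a > 0 and 0 < s ≤ 1 be real, and let u, v, w be unit vectors in H with ⟨w,u⟩ = ⟨w,v⟩ = exp(−a/2) and ⟨u,v⟩ = exp(−a + a·s). Let ũ = (u − ⟨w,u⟩w)/‖u − ⟨w,u⟩w‖ and ṽ = (v − ⟨w,v⟩w)/‖v − ⟨w,v⟩w‖ be the normalized projections of u and v onto the orthogonal complement of w. Then ⟨ũ, ṽ⟩ = (exp(a·s) − 1)/(exp(a) − 1). -/
open scoped ComplexInnerProductSpace

/-!
For a unit vector `w`, the component orthogonal to `w` of `x` is `x - ⟪w, x⟫ • w`, and the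
inner product of two such components is `⟪x, y⟫ - ⟪x, w⟫ ⟪w, y⟫`. Here this gives
`e^{-a+as} - e^{-a}` for the cross term and `1 - e^{-a}` for both squared norms; multiplying
numerator and denominator of the ratio by `e^a` yields `(e^{as} - 1) / (e^a - 1)`.
-/

section

open scoped InnerProductSpace

variable {𝕜 E : Type*} [RCLike 𝕜] [NormedAddCommGroup E] [InnerProductSpace 𝕜 E]

theorem inner_sub_inner_smul_sub_inner_smul {w : E} (hw : ‖w‖ = 1) (x y : E) :
    ⟪x - ⟪w, x⟫_𝕜 • w, y - ⟪w, y⟫_𝕜 • w⟫_𝕜 = ⟪x, y⟫_𝕜 - ⟪x, w⟫_𝕜 * ⟪w, y⟫_𝕜 := by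
  have hww : ⟪w, w⟫_𝕜 = 1 := by simp [inner_self_eq_norm_sq_to_K, hw]
  simp only [inner_sub_left, inner_sub_right, inner_smul_left, inner_smul_right, hww,
    inner_conj_symm]
  ring

theorem norm_sub_inner_smul_sq {w : E} (hw : ‖w‖ = 1) (x : E) :
    ‖x - ⟪w, x⟫_𝕜 • w‖ ^ 2 = ‖x‖ ^ 2 - ‖⟪w, x⟫_𝕜‖ ^ 2 := by
  have h := congrArg RCLike.re (inner_sub_inner_smul_sub_inner_smul (𝕜 := 𝕜) hw x x)
  rwa [← inner_conj_symm x w, RCLike.conj_mul, ← RCLike.ofReal_pow, map_sub, RCLike.ofReal_re,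
    inner_self_eq_norm_sq, inner_self_eq_norm_sq] at h

theorem inner_inv_norm_smul_of_norm_eq {x y : E} (h : ‖x‖ = ‖y‖) :
    ⟪(‖x‖ : 𝕜)⁻¹ • x, (‖y‖ : 𝕜)⁻¹ • y⟫_𝕜 = ⟪x, y⟫_𝕜 / (‖x‖ ^ 2 : ℝ) := by
  rw [inner_smul_left, inner_smul_right, ← h, map_inv₀, RCLike.conj_ofReal, ← mul_assoc,
    ← mul_inv, ← sq, div_eq_inv_mul, RCLike.ofReal_pow]

end

theorem exp_overlap_ratio (a s : ℝ) :
    (Real.exp (-a + a * s) - Real.exp (-a / 2) * Real.exp (-a / 2)) /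
        (1 - Real.exp (-a / 2) * Real.exp (-a / 2)) =
      (Real.exp (a * s) - 1) / (Real.exp a - 1) := by
  have h : Real.exp (-a / 2) * Real.exp (-a / 2) = (Real.exp a)⁻¹ := by
    rw [← Real.exp_add, ← Real.exp_neg]; ring_nf
  rw [h, Real.exp_add, Real.exp_neg]
  field_simp

theorem inner_projections_orthogonal_vacuum_general
    {H : Type*} [NormedAddCommGroup H] [InnerProductSpace ℂ H]
    {a s : ℝ}
    (u v w : H) (hu : ‖u‖ = 1) (hv : ‖v‖ = 1) (hw : ‖w‖ = 1)
    (hwu : ⟪w, u⟫ = ((Real.exp (-a / 2) : ℝ) : ℂ))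
    (hwv : ⟪w, v⟫ = ((Real.exp (-a / 2) : ℝ) : ℂ))
    (huv : ⟪u, v⟫ = ((Real.exp (-a + a * s) : ℝ) : ℂ)) :
    ⟪(‖u - ⟪w, u⟫ • w‖ : ℂ)⁻¹ • (u - ⟪w, u⟫ • w),
      (‖v - ⟪w, v⟫ • w‖ : ℂ)⁻¹ • (v - ⟪w, v⟫ • w)⟫ =
      (((Real.exp (a * s) - 1) / (Real.exp a - 1) : ℝ) : ℂ) := by
  have huw : ⟪u, w⟫ = ((Real.exp (-a / 2) : ℝ) : ℂ) := by
    rw [← inner_conj_symm, hwu, Complex.conj_ofReal]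
  have hsq : ‖u - ⟪w, u⟫ • w‖ ^ 2 = ‖v - ⟪w, v⟫ • w‖ ^ 2 := by
    rw [norm_sub_inner_smul_sq hw, norm_sub_inner_smul_sq hw, hu, hv, hwu, hwv]
  have hnorm := (sq_eq_sq₀ (norm_nonneg _) (norm_nonneg _)).mp hsq
  refine (inner_inv_norm_smul_of_norm_eq hnorm).trans ?_
  rw [RCLike.ofReal_eq_complex_ofReal, norm_sub_inner_smul_sq hw,
    inner_sub_inner_smul_sub_inner_smul hw, huv, huw, hwv, hu, hwu, Complex.norm_real,
    Real.norm_of_nonneg (Real.exp_pos _).le, ← exp_overlap_ratio a s]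
  push_cast
  ring

/-- overlap after projecting out the vacuum. For unit vectors
`u, v, w` in a complex Hilbert space with `⟨w,u⟩ = ⟨w,v⟩ = e^{−a/2}` and
`⟨u,v⟩ = e^{−a+as}`, the normalized projections of `u` and `v` onto the orthogonal
complement of `w` satisfy `⟨ũ, ṽ⟩ = (e^{as} − 1)/(e^{a} − 1)`. -/
theorem inner_projections_orthogonal_vacuum
    {H : Type*} [NormedAddCommGroup H] [InnerProductSpace ℂ H] [CompleteSpace H]
    {a s : ℝ} (ha : 0 < a) (hs0 : 0 < s) (hs1 : s ≤ 1)
    (u v w : H) (hu : ‖u‖ = 1) (hv : ‖v‖ = 1) (hw : ‖w‖ = 1)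
    (hwu : ⟪w, u⟫ = ((Real.exp (-a / 2) : ℝ) : ℂ))
    (hwv : ⟪w, v⟫ = ((Real.exp (-a / 2) : ℝ) : ℂ))
    (huv : ⟪u, v⟫ = ((Real.exp (-a + a * s) : ℝ) : ℂ)) :
    ⟪(‖u - ⟪w, u⟫ • w‖ : ℂ)⁻¹ • (u - ⟪w, u⟫ • w),
      (‖v - ⟪w, v⟫ • w‖ : ℂ)⁻¹ • (v - ⟪w, v⟫ • w)⟫ =
      (((Real.exp (a * s) - 1) / (Real.exp a - 1) : ℝ) : ℂ) :=
  inner_projections_orthogonal_vacuum_general u v w hu hv hw hwu hwv huv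
end
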